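/- Let (R,m) be a commutative noetherian local ring and let S be a Serre class of R-modules containing a nonzero R-module. If M is a minimax R-module, then the R-module Ext^j_R(R/m, M) belongs to S for every integer j ≥ 0. -/

import Mathlib

universe u

open CategoryTheory Opposite

/-- A Serre class of `R`-modules: a class of `R`-modules closed under isomorphisms,
submodules, quotient modules, and extensions. (Closure under isomorphisms follows from
closure under submodules via injective maps, resp. quotients via surjective maps.) -/
structure SerreClass (R : Type u) [CommRing R] : Type (u + 1) where
  /-- the membership predicate for the class -/
  Mem : ∀ (M : Type u) [AddCommGroup M] [Module R M], Prop
  /-- the class is closed under taking submodules (hence under isomorphisms) -/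
  mem_of_injective :
    ∀ {M N : Type u} [AddCommGroup M] [Module R M] [AddCommGroup N] [Module R N]
      (f : M →ₗ[R] N), Function.Injective f → Mem N → Mem M
  /-- the class is closed under taking quotient modules (hence under isomorphisms) -/
  mem_of_surjective :
    ∀ {M N : Type u} [AddCommGroup M] [Module R M] [AddCommGroup N] [Module R N]
      (f : M →ₗ[R] N), Function.Surjective f → Mem M → Mem N
  /-- the class is closed under extensions: if a submodule `N ⊆ M` and the quotient `M/N`
  belong to the class, then so does `M` -/
  mem_of_extension :
    ∀ {M : Type u} [AddCommGroup M] [Module R M] (N : Submodule R M),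
      Mem N → Mem (M ⧸ N) → Mem M

/-- An `R`-module `M` is *minimax* if it has a finitely generated submodule `N`
such that `M/N` is artinian. -/
def IsMinimax (R : Type u) [CommRing R] (M : Type u) [AddCommGroup M] [Module R M] : Prop :=
  ∃ N : Submodule R M, N.FG ∧ IsArtinian R (M ⧸ N)

/-! `Ext^j(R/m, M)` can be computed from a resolution of `R/m` by finite free modules, so it is a
subquotient of some `M^n` and hence minimax. It is killed by `m`: for `r ∈ m`, multiplication by
`r` on the resolution lifts the zero map of `R/m`, so it is null-homotopic. A minimax module killed
by `m` is an extension of an artinian by a noetherian semisimple module, so it has finite length;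
all its composition factors are `R/m`, which lies in `S` as a quotient of a cyclic submodule of
any nonzero member of `S`. -/

namespace SerreClass

variable {R : Type u} [CommRing R] (S : SerreClass R)

def IsNonzero : Prop :=
  ∃ (M : Type u) (_ : AddCommGroup M) (_ : Module R M), Nontrivial M ∧ S.Mem M

variable {S}

theorem mem_of_linearEquiv {V W : Type u} [AddCommGroup V] [Module R V] [AddCommGroup W]
    [Module R W] (e : V ≃ₗ[R] W) (h : S.Mem W) : S.Mem V :=
  S.mem_of_injective e.toLinearMap e.injective h

theorem IsNonzero.mem_of_subsingleton (hS : S.IsNonzero) (V : Type u) [AddCommGroup V]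
    [Module R V] [Subsingleton V] : S.Mem V := by
  obtain ⟨X, _, _, -, hX⟩ := hS
  exact S.mem_of_injective (0 : V →ₗ[R] X) (fun a b _ => Subsingleton.elim a b) hX

open IsLocalRing in
theorem IsNonzero.mem_residueField [IsLocalRing R] (hS : S.IsNonzero) :
    S.Mem (R ⧸ maximalIdeal R) := by
  obtain ⟨X, _, _, _, hX⟩ := hS
  obtain ⟨x, hx⟩ := exists_ne (0 : X)
  set f := LinearMap.toSpanSingleton R X x
  have hker : LinearMap.ker f ≤ maximalIdeal R := by
    refine le_maximalIdeal fun h => hx ?_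
    simpa [f] using (h ▸ Submodule.mem_top : (1 : R) ∈ LinearMap.ker f)
  have hcyclic : S.Mem (R ⧸ LinearMap.ker f) :=
    S.mem_of_injective _ (LinearMap.ker_eq_bot.mp
      ((LinearMap.ker f).ker_liftQ_eq_bot' f rfl)) hX
  exact S.mem_of_surjective _ (Submodule.factor_surjective hker) hcyclic

theorem IsNonzero.mem_of_isSimpleModule [IsLocalRing R] (hS : S.IsNonzero) (V : Type u)
    [AddCommGroup V] [Module R V] [IsSimpleModule R V] : S.Mem V := by
  obtain ⟨m, hm, ⟨e⟩⟩ := isSimpleModule_iff_quot_maximal.mp ‹IsSimpleModule R V›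
  rw [IsLocalRing.eq_maximalIdeal hm] at e
  exact mem_of_linearEquiv e hS.mem_residueField

theorem IsNonzero.mem_of_isFiniteLength [IsLocalRing R] (hS : S.IsNonzero) {V : Type u}
    [AddCommGroup V] [Module R V] (hV : IsFiniteLength R V) : S.Mem V := by
  induction hV with
  | of_subsingleton => exact hS.mem_of_subsingleton _
  | of_simple_quotient _ ih => exact S.mem_of_extension _ ih (hS.mem_of_isSimpleModule _)

end SerreClass

theorem Module.IsTorsionBySet.isSemisimpleModule {R V : Type*} [CommRing R] [AddCommGroup V]
    [Module R V] {m : Ideal R} [m.IsMaximal] (hV : Module.IsTorsionBySet R V m) :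
    IsSemisimpleModule R V := by
  let := Ideal.Quotient.field m
  let := hV.module
  exact hV.isSemisimpleModule_iff.mp inferInstance

namespace IsMinimax

variable {R : Type u} [CommRing R] {V W : Type u} [AddCommGroup V] [Module R V]
  [AddCommGroup W] [Module R W]

theorem of_injective [IsNoetherianRing R] (h : IsMinimax R W) (f : V →ₗ[R] W)
    (hf : Function.Injective f) : IsMinimax R V := by
  obtain ⟨N, hN, _⟩ := h
  refine ⟨N.comap f,
    Submodule.fg_of_fg_map_injective f hf (hN.of_le (Submodule.map_comap_le f N)), ?_⟩
  refine isArtinian_of_injective ((N.comap f).mapQ N f le_rfl) ?_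
  rw [← LinearMap.ker_eq_bot, Submodule.ker_mapQ, Submodule.mkQ_map_self]

theorem of_surjective (h : IsMinimax R V) (f : V →ₗ[R] W) (hf : Function.Surjective f) :
    IsMinimax R W := by
  obtain ⟨N, hN, _⟩ := h
  refine ⟨N.map f, hN.map f,
    isArtinian_of_surjective _ (N.mapQ _ f (Submodule.le_comap_map f N)) ?_⟩
  rw [← LinearMap.range_eq_top, Submodule.range_mapQ, LinearMap.range_eq_top.mpr hf,
    Submodule.map_top, Submodule.range_mkQ]

theorem pi (h : IsMinimax R V) (n : ℕ) : IsMinimax R (Fin n → V) := by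
  obtain ⟨N, hN, _⟩ := h
  refine ⟨Submodule.pi Set.univ fun _ => N, Submodule.fg_pi fun _ => hN, ?_⟩
  exact isArtinian_of_linearEquiv (Submodule.quotientPi fun _ => N).symm

theorem linearMap [IsNoetherianRing R] (h : IsMinimax R V) (P : Type u) [AddCommGroup P]
    [Module R P] [Module.Finite R P] : IsMinimax R (P →ₗ[R] V) := by
  obtain ⟨n, s, hs⟩ := Module.Finite.exists_fin (R := R) (M := P)
  refine (h.pi n).of_injective (LinearMap.pi fun i => LinearMap.applyₗ (s i)) fun f g hfg => ?_
  exact LinearMap.ext_on_range hs fun i => congr_fun hfg i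

theorem homology [IsNoetherianRing R] {ι : Type*} {c : ComplexShape ι}
    {K : HomologicalComplex (ModuleCat.{u} R) c} {i : ι}
    (h : IsMinimax R (K.X i)) : IsMinimax R (K.homology i) :=
  (h.of_injective _ ((ModuleCat.mono_iff_injective (K.iCycles i)).mp inferInstance)).of_surjective
    _ ((ModuleCat.epi_iff_surjective (K.homologyπ i)).mp inferInstance)

end IsMinimax

open IsLocalRing in
theorem SerreClass.IsNonzero.mem_of_isMinimax_of_isTorsionBySet {R : Type u} [CommRing R]
    [IsNoetherianRing R] [IsLocalRing R] {S : SerreClass R} (hS : S.IsNonzero) {V : Type u}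
    [AddCommGroup V] [Module R V] (hV : IsMinimax R V)
    (htors : Module.IsTorsionBySet R V (maximalIdeal R)) : S.Mem V := by
  obtain ⟨N, hN, _⟩ := hV
  have : IsNoetherian R N := isNoetherian_of_fg_of_noetherian N hN
  have : IsSemisimpleModule R N :=
    Module.IsTorsionBySet.isSemisimpleModule fun x a => Subtype.ext (htors (x := x.1) (a := a))
  have : IsSemisimpleModule R (V ⧸ N) := (htors.quotient N).isSemisimpleModule
  exact S.mem_of_extension N
    (hS.mem_of_isFiniteLength ((IsSemisimpleModule.finite_tfae.out 1 3).mp ‹_›))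
    (hS.mem_of_isFiniteLength ((IsSemisimpleModule.finite_tfae.out 2 3).mp ‹_›))

theorem HomologicalComplex.homologyMap_smul {R : Type*} [Semiring R] {C : Type*} [Category* C]
    [Preadditive C] [Linear R C] {ι : Type*} {c : ComplexShape ι} {K L : HomologicalComplex C c}
    (φ : K ⟶ L) (r : R) (i : ι) [K.HasHomology i] [L.HasHomology i] :
    homologyMap (r • φ) i = r • homologyMap φ i :=
  ShortComplex.homologyMap_smul ((shortComplexFunctor C c i).map φ) r

def ChainComplex.linearYonedaObjHomotopy {R : Type*} [CommRing R] {C : Type*} [Category* C]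
    [Abelian C] [Linear R C] {P : ChainComplex C ℕ} (Y : C) {r : R}
    (H : Homotopy (r • 𝟙 P) 0) :
    Homotopy (r • 𝟙 (P.linearYonedaObj R Y)) 0 where
  hom i j := ModuleCat.ofHom (Linear.leftComp R Y (H.hom j i))
  zero i j hij := by
    ext
    simp only [H.zero j i hij, ConcreteCategory.hom_ofHom, Linear.leftComp_apply, Limits.zero_comp]
    rfl
  comm n := by
    ext (f : P.X n ⟶ Y)
    have h := congrArg (· ≫ f) (H.comm n)
    simp only [HomologicalComplex.smul_f_apply, HomologicalComplex.id_f, Linear.smul_comp,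
      Category.id_comp, dNext, AddMonoidHom.mk'_apply, prevD, HomologicalComplex.zero_f, add_zero,
      Preadditive.add_comp, Category.assoc, ModuleCat.hom_smul, ModuleCat.hom_id,
      LinearMap.coe_smul, LinearMap.id_coe, linearYonedaObj_d, ModuleCat.hom_add] at h ⊢
    exact h.trans (add_comm _ _)

theorem Homotopy.isTorsionBy_homology {R : Type*} [CommRing R] {ι : Type*}
    {c : ComplexShape ι} {K : HomologicalComplex (ModuleCat R) c} {r : R}
    (H : Homotopy (r • 𝟙 K) 0) (i : ι) : Module.IsTorsionBy R (K.homology i) r := by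
  intro z
  have h := H.homologyMap_eq i
  rw [HomologicalComplex.homologyMap_smul, HomologicalComplex.homologyMap_id,
    HomologicalComplex.homologyMap_zero] at h
  exact congr(ModuleCat.Hom.hom $h z)

theorem Ext.isTorsionBy {R : Type*} [CommRing R] {C : Type*} [Category* C] [Abelian C]
    [Linear R C] [EnoughProjectives C] {X : C} {r : R} (hX : r • 𝟙 X = 0) (Y : C) (n : ℕ) :
    Module.IsTorsionBy R (((Ext R C n).obj (op X)).obj Y) r := by
  let P := projectiveResolution X
  have hπ : (r • 𝟙 P.complex) ≫ P.π = 0 := by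
    refine HomologicalComplex.to_single_hom_ext ?_
    have h0 : r • 𝟙 (((ChainComplex.single₀ C).obj X).X 0) = 0 := hX
    simp only [HomologicalComplex.comp_f, HomologicalComplex.smul_f_apply,
      HomologicalComplex.id_f, HomologicalComplex.zero_f]
    rw [← Category.comp_id (P.π.f 0), Linear.smul_comp, Category.id_comp, ← Linear.comp_smul,
      h0, Limits.comp_zero]
  have htors :=
    (P.complex.linearYonedaObjHomotopy Y (P.liftHomotopyZero _ hπ)).isTorsionBy_homology n
  intro x
  exact (P.isoExt n Y).toLinearEquiv.injective (by rw [map_smul, map_zero]; exact htors (x := _))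

namespace Module.Finite

variable (R : Type u) [CommRing R] (M : Type u) [AddCommMonoid M] [Module R M]
  [Module.Finite R M]

noncomputable def coverRank : ℕ := (exists_fin' R M).choose

noncomputable def cover : (Fin (coverRank R M) → R) →ₗ[R] M :=
  (exists_fin' R M).choose_spec.choose

theorem cover_surjective : Function.Surjective (cover R M) :=
  (exists_fin' R M).choose_spec.choose_spec

end Module.Finite

namespace FiniteFreeResolution

open Module.Finite

variable (R : Type u) [CommRing R] [IsNoetherianRing R] (N : Type u) [AddCommGroup N] [Module R N]
  [Module.Finite R N]

/-- The `i`-th syzygy of `N`, as a submodule of the `i`-th term `Fin n → R` of the resolution. -/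
noncomputable def syzygy : ℕ → Σ n : ℕ, Submodule R (Fin n → R)
  | 0 => ⟨_, LinearMap.ker (cover R N)⟩
  | i + 1 => ⟨_, LinearMap.ker ((syzygy i).2.subtype ∘ₗ cover R (syzygy i).2)⟩

noncomputable def d (i : ℕ) :
    (Fin (syzygy R N (i + 1)).1 → R) →ₗ[R] (Fin (syzygy R N i).1 → R) :=
  (syzygy R N i).2.subtype ∘ₗ cover R (syzygy R N i).2

theorem range_d (i : ℕ) : LinearMap.range (d R N i) = (syzygy R N i).2 := by
  have h := LinearMap.range_comp_of_range_eq_top (syzygy R N i).2.subtype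
    (LinearMap.range_eq_top.mpr (cover_surjective R (syzygy R N i).2))
  rwa [Submodule.range_subtype] at h

theorem range_d_zero : LinearMap.range (d R N 0) = LinearMap.ker (cover R N) :=
  range_d R N 0

theorem range_d_succ (i : ℕ) : LinearMap.range (d R N (i + 1)) = LinearMap.ker (d R N i) :=
  range_d R N (i + 1)

noncomputable def complex : ChainComplex (ModuleCat.{u} R) ℕ :=
  ChainComplex.of (fun i => ModuleCat.of R (Fin (syzygy R N i).1 → R))
    (fun i => ModuleCat.ofHom (d R N i))
    (fun i => ModuleCat.hom_ext (LinearMap.range_le_ker_iff.mp (range_d_succ R N i).le))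

theorem complex_d (i : ℕ) : (complex R N).d (i + 1) i = ModuleCat.ofHom (d R N i) := by
  simp [complex]

noncomputable def π :
    complex R N ⟶ (ChainComplex.single₀ (ModuleCat.{u} R)).obj (ModuleCat.of R N) :=
  (ChainComplex.toSingle₀Equiv _ _).symm ⟨ModuleCat.ofHom (cover R N), by
    rw [complex_d]
    exact ModuleCat.hom_ext (LinearMap.range_le_ker_iff.mp (range_d_zero R N).le)⟩

theorem π_f_zero : (π R N).f 0 = ModuleCat.ofHom (cover R N) :=
  ChainComplex.toSingle₀Equiv_symm_apply_f_zero _ _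

theorem complex_exactAt_succ (n : ℕ) : (complex R N).ExactAt (n + 1) := by
  rw [HomologicalComplex.exactAt_iff' _ (n + 2) (n + 1) n (by simp) (by simp),
    ShortComplex.moduleCat_exact_iff_range_eq_ker]
  simp only [HomologicalComplex.shortComplexFunctor'_obj_f, complex_d,
    HomologicalComplex.shortComplexFunctor'_obj_g]
  exact range_d_succ R N n

end FiniteFreeResolution

open FiniteFreeResolution Module.Finite in
noncomputable def finiteFreeResolution (R : Type u) [CommRing R] [IsNoetherianRing R] (N : Type u)
    [AddCommGroup N] [Module R N] [Module.Finite R N] :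
    ProjectiveResolution (ModuleCat.of R N) where
  complex := complex R N
  projective n := by dsimp only [complex]; infer_instance
  π := π R N
  quasiIso := ⟨fun n => by
    cases n with
    | zero =>
      rw [ChainComplex.quasiIsoAt₀_iff, ShortComplex.quasiIso_iff_of_zeros' _ rfl rfl rfl]
      constructor
      · rw [ShortComplex.moduleCat_exact_iff_range_eq_ker]
        simp only [HomologicalComplex.shortComplexFunctor'_obj_f, complex_d,
          HomologicalComplex.shortComplexFunctor'_map_τ₂, π_f_zero]
        exact range_d_zero R N
      · rw [ModuleCat.epi_iff_surjective]
        simp only [HomologicalComplex.shortComplexFunctor'_map_τ₂, π_f_zero]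
        exact cover_surjective R N
    | succ n =>
      rw [quasiIsoAt_iff_exactAt' _ _ (ChainComplex.exactAt_succ_single_obj _ _)]
      exact complex_exactAt_succ R N n⟩

theorem Ext.isMinimax {R : Type u} [CommRing R] [IsNoetherianRing R] (N : Type u)
    [AddCommGroup N] [Module R N] [Module.Finite R N] {M : Type u} [AddCommGroup M] [Module R M]
    (hM : IsMinimax R M) (n : ℕ) :
    IsMinimax R
      (((Ext R (ModuleCat.{u} R) n).obj (op (ModuleCat.of R N))).obj (ModuleCat.of R M)) := by
  let P := finiteFreeResolution R N
  refine IsMinimax.of_injective ?_ _ (P.isoExt n (ModuleCat.of R M)).toLinearEquiv.injective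
  refine IsMinimax.homology ?_
  exact (hM.linearMap (Fin _ → R)).of_injective _ ModuleCat.homLinearEquiv.injective

/-- Let `(R, m)` be a commutative noetherian local ring and let `S` be a Serre class of
`R`-modules containing a nonzero `R`-module. If `M` is a minimax `R`-module, then
`Ext^j_R(R/m, M) ∈ S` for every integer `j ≥ 0`. -/
theorem stmt4 (R : Type u) [CommRing R] [IsNoetherianRing R] [IsLocalRing R]
    (S : SerreClass R)
    (hS : ∃ (M : Type u) (_ : AddCommGroup M) (_ : Module R M), Nontrivial M ∧ S.Mem M)
    (M : Type u) [AddCommGroup M] [Module R M] (hM : IsMinimax R M) (j : ℕ) :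
    S.Mem ↥(((Ext R (ModuleCat.{u} R) j).obj
      (op (ModuleCat.of R (R ⧸ IsLocalRing.maximalIdeal R)))).obj (ModuleCat.of R M)) := by
  have hk (r : IsLocalRing.maximalIdeal R) :
      (r : R) • 𝟙 (ModuleCat.of R (R ⧸ IsLocalRing.maximalIdeal R)) = 0 := by
    ext
    simp only [ModuleCat.hom_smul, ModuleCat.hom_id, LinearMap.comp_apply, LinearMap.smul_apply,
      LinearMap.id_apply, ModuleCat.hom_zero, LinearMap.zero_apply, Submodule.mkQ_apply,
      ← Submodule.Quotient.mk_smul, Submodule.Quotient.mk_eq_zero, smul_eq_mul, mul_one]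
    exact r.2
  exact SerreClass.IsNonzero.mem_of_isMinimax_of_isTorsionBySet hS (Ext.isMinimax _ hM j)
    fun _ r => Ext.isTorsionBy (hk r) _ _ (x := _)
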